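/- Let p' > p ≥ 2 and q' > q ≥ 2 be integers, and let F : D^I_{q,p} → D^I_{q',p'} be a proper holomorphic map such that for every row vector A ∈ M(1,q;ℂ) and every Z ∈ D^I_{q,p}, one has (A, 0_{1×(q'−q)}) · F(Z) = (A·Z, 0_{1×(p'−p)}), where (A,0) ∈ M(1,q';ℂ) and (AZ,0) ∈ M(1,p';ℂ) denote the row vectors padded with zeros. Then there is a holomorphic map F₂₂ : D^I_{q,p} → D^I_{q'−q, p'−p} such that F(Z) is the block-diagonal matrix [[Z,0],[0,F₂₂(Z)]] for all Z ∈ D^I_{q,p}. -/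

import Mathlib

open Matrix
open scoped ComplexOrder

attribute [local instance] Matrix.normedAddCommGroup Matrix.normedSpace

/-- The type-I irreducible bounded symmetric domain `D^I_{m,n}`,
realized as the set of complex `m × n` matrices `Z` with `I - Zᴴ Z` positive definite. -/
def typeIDomain (m n : ℕ) : Set (Matrix (Fin m) (Fin n) ℂ) :=
  {Z | (1 - Zᴴ * Z).PosDef}

/-- `f` maps `D` into `D'` and the `f`-preimage of every compact subset of `D'`
is a compact subset of `D`. -/
def ProperOn {E F : Type*} [TopologicalSpace E] [TopologicalSpace F]
    (f : E → F) (D : Set E) (D' : Set F) : Prop :=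
  Set.MapsTo f D D' ∧ ∀ K : Set F, K ⊆ D' → IsCompact K → IsCompact (D ∩ f ⁻¹' K)

/-- `Φ` is a (biholomorphic) automorphism of the type-I domain `D^I_{m,n}`. -/
def IsAutOf {m n : ℕ} (Φ : Matrix (Fin m) (Fin n) ℂ → Matrix (Fin m) (Fin n) ℂ) : Prop :=
  Set.MapsTo Φ (typeIDomain m n) (typeIDomain m n) ∧
  DifferentiableOn ℂ Φ (typeIDomain m n) ∧
  ∃ Ψ, Set.MapsTo Ψ (typeIDomain m n) (typeIDomain m n) ∧
    DifferentiableOn ℂ Ψ (typeIDomain m n) ∧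
    (∀ Z ∈ typeIDomain m n, Ψ (Φ Z) = Z) ∧
    (∀ Z ∈ typeIDomain m n, Φ (Ψ Z) = Z)

/-- The block-diagonal matrix `[[Z, 0], [0, W]]`, reindexed to size `p' × q'`. -/
def diagBlock {p q a b p' q' : ℕ} (hp : p + a = p') (hq : q + b = q')
    (Z : Matrix (Fin p) (Fin q) ℂ) (W : Matrix (Fin a) (Fin b) ℂ) :
    Matrix (Fin p') (Fin q') ℂ :=
  Matrix.reindex (finCongr hp) (finCongr hq)
    (Matrix.reindex finSumFinEquiv finSumFinEquiv (Matrix.fromBlocks Z 0 0 W))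


/-- Pad a row vector of length `a` with zeros to obtain a row vector of length `b`. -/
def padRow {a : ℕ} (b : ℕ) (v : Fin a → ℂ) : Fin b → ℂ :=
  fun i => if h : (i : ℕ) < a then v ⟨(i : ℕ), h⟩ else 0

/-
The hypothesis on `F` says that the first `q` rows of `F Z` are `[Z, 0]`, so everything comes down
to the lower-left block `C Z`. As `F Z` is a strict contraction, `‖Z x‖² + ‖C Z x‖² ≤ ‖x‖²`.
If `v` is a unit eigenvector of `Zᴴ Z` with eigenvalue `σ² > 0`, there is a holomorphic disc
`t ↦ Z_t` in the domain with `Z_σ = Z` and `‖Z_t v‖ = |t|`; then `‖C Z_t v‖² ≤ 1 - |t|²`, and the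
maximum principle gives `C Z v = 0`. Hence `C Z * Zᴴ = 0` on the whole domain. Along a line
`Z + t E` this identity is holomorphic in `t` except for the factor `conj t` in `(Z + t E)ᴴ`, and
that forces `C Z = 0`. The lower-right block is then a holomorphic map into `D^I_{q'-q,p'-p}`.
-/

section VecNormSq

variable {n : Type*} [Fintype n]

-- The squared Euclidean norm (the norm instance on `n → ℂ` is the sup norm).
noncomputable def vecNormSq (x : n → ℂ) : ℝ := ∑ i, Complex.normSq (x i)

lemma ofReal_vecNormSq (x : n → ℂ) : (vecNormSq x : ℂ) = star x ⬝ᵥ x := by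
  simp [vecNormSq, dotProduct, Complex.mul_conj', mul_comm, Complex.normSq_eq_norm_sq]

@[simp]
lemma vecNormSq_zero : vecNormSq (0 : n → ℂ) = 0 := by
  simp [vecNormSq]

lemma normSq_le_vecNormSq (x : n → ℂ) (i : n) : Complex.normSq (x i) ≤ vecNormSq x :=
  Finset.single_le_sum (fun j _ => Complex.normSq_nonneg (x j)) (Finset.mem_univ i)

lemma vecNormSq_smul (c : ℂ) (x : n → ℂ) : vecNormSq (c • x) = Complex.normSq c * vecNormSq x := by
  simp [vecNormSq, Complex.normSq_mul, Finset.mul_sum]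

lemma vecNormSq_add (x y : n → ℂ) :
    vecNormSq (x + y) = vecNormSq x + 2 * (star x ⬝ᵥ y).re + vecNormSq y := by
  have h : star y ⬝ᵥ x = star (star x ⬝ᵥ y) := by rw [star_dotProduct]
  apply Complex.ofReal_injective
  push_cast
  rw [ofReal_vecNormSq, ofReal_vecNormSq, ofReal_vecNormSq, star_add, add_dotProduct,
    dotProduct_add, dotProduct_add, h, Complex.re_eq_add_conj]
  simp only [Complex.star_def]
  ring

lemma vecNormSq_add_of_orthogonal {x y : n → ℂ} (h : star x ⬝ᵥ y = 0) :
    vecNormSq (x + y) = vecNormSq x + vecNormSq y := by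
  simp [vecNormSq_add, h]

lemma vecNormSq_sumElim {m : Type*} [Fintype m] (x : n → ℂ) (y : m → ℂ) :
    vecNormSq (Sum.elim x y) = vecNormSq x + vecNormSq y :=
  Fintype.sum_sum_type _

lemma continuous_vecNormSq : Continuous (vecNormSq : (n → ℂ) → ℝ) := by
  unfold vecNormSq; fun_prop

end VecNormSq

section Contraction

variable {m n : Type*} [Fintype m]

lemma Matrix.PosDef.one_sub_conjTranspose_mul_self_submatrix {m' n' : Type*} [Fintype m']
    [DecidableEq n] [DecidableEq n'] {Z : Matrix m n ℂ} (hZ : (1 - Zᴴ * Z).PosDef)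
    (e : m' ≃ m) (f : n' ≃ n) : (1 - (Z.submatrix e f)ᴴ * Z.submatrix e f).PosDef := by
  rw [conjTranspose_submatrix, submatrix_mul_equiv _ _ _ e, ← submatrix_one_equiv f]
  exact hZ.submatrix f.injective

variable [Fintype n]

lemma star_mulVec_dotProduct_mulVec (Z : Matrix m n ℂ) (x y : n → ℂ) :
    star (Z *ᵥ x) ⬝ᵥ (Z *ᵥ y) = star x ⬝ᵥ ((Zᴴ * Z) *ᵥ y) := by
  rw [star_mulVec, ← dotProduct_mulVec, mulVec_mulVec]

variable [DecidableEq n]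

lemma posDef_one_sub_conjTranspose_mul_self_iff {Z : Matrix m n ℂ} :
    (1 - Zᴴ * Z).PosDef ↔ ∀ x ≠ 0, vecNormSq (Z *ᵥ x) < vecNormSq x := by
  have hform : ∀ x, star x ⬝ᵥ ((1 - Zᴴ * Z) *ᵥ x) =
      ((vecNormSq x - vecNormSq (Z *ᵥ x) : ℝ) : ℂ) := by
    intro x
    rw [sub_mulVec, one_mulVec, dotProduct_sub, ← star_mulVec_dotProduct_mulVec]
    push_cast
    rw [ofReal_vecNormSq, ofReal_vecNormSq]
  refine ⟨fun hZ x hx => ?_, fun h => .of_dotProduct_mulVec_pos ?_ fun x hx => ?_⟩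
  · have := hZ.dotProduct_mulVec_pos hx
    rw [hform, Complex.zero_lt_real] at this
    linarith
  · simp [IsHermitian, conjTranspose_sub, conjTranspose_mul]
  · rw [hform, Complex.zero_lt_real]
    linarith [h x hx]

lemma vecNormSq_mulVec_le {Z : Matrix m n ℂ} (hZ : (1 - Zᴴ * Z).PosDef) (x : n → ℂ) :
    vecNormSq (Z *ᵥ x) ≤ vecNormSq x := by
  rcases eq_or_ne x 0 with rfl | hx
  · simp
  · exact (posDef_one_sub_conjTranspose_mul_self_iff.mp hZ x hx).le

end Contraction

section Blocks

variable {m₁ m₂ n₁ n₂ : Type*} [Fintype m₁] [Fintype m₂] [Fintype n₁] [Fintype n₂]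
  [DecidableEq n₁] [DecidableEq n₂] {A : Matrix m₁ n₁ ℂ} {C : Matrix m₂ n₁ ℂ}
  {D : Matrix m₂ n₂ ℂ}

lemma vecNormSq_mulVec_add_le_of_fromBlocks
    (h : (1 - (fromBlocks A 0 C D)ᴴ * fromBlocks A 0 C D).PosDef) (x : n₁ → ℂ) :
    vecNormSq (A *ᵥ x) + vecNormSq (C *ᵥ x) ≤ vecNormSq x := by
  simpa [fromBlocks_mulVec, vecNormSq_sumElim] using vecNormSq_mulVec_le h (Sum.elim x 0)

lemma Matrix.PosDef.one_sub_conjTranspose_mul_self_of_fromBlocks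
    (h : (1 - (fromBlocks A 0 C D)ᴴ * fromBlocks A 0 C D).PosDef) : (1 - Dᴴ * D).PosDef := by
  rw [posDef_one_sub_conjTranspose_mul_self_iff] at h ⊢
  intro y hy
  simpa [fromBlocks_mulVec, vecNormSq_sumElim] using
    h (Sum.elim 0 y) (by simpa [funext_iff, Sum.forall] using hy)

end Blocks

lemma isOpen_typeIDomain (m n : ℕ) : IsOpen (typeIDomain m n) := by
  have hS : IsCompact (Metric.sphere (0 : Fin n → ℂ) 1) := isCompact_sphere 0 1
  refine isOpen_iff_mem_nhds.mpr fun Z₀ hZ₀ => ?_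
  have hev : ∀ᶠ Z in nhds Z₀, ∀ u ∈ Metric.sphere (0 : Fin n → ℂ) 1,
      vecNormSq (Z *ᵥ u) < vecNormSq u := by
    refine hS.eventually_forall_of_forall_eventually fun u hu => ?_
    have hu0 : u ≠ 0 := ne_zero_of_mem_sphere one_ne_zero ⟨u, hu⟩
    have hcont : Continuous fun z : Matrix (Fin m) (Fin n) ℂ × (Fin n → ℂ) =>
        vecNormSq (z.1 *ᵥ z.2) := by
      refine continuous_vecNormSq.comp (continuous_pi fun i => ?_)
      simp only [mulVec, dotProduct]
      fun_prop
    exact hcont.continuousAt.eventually_lt (continuous_vecNormSq.comp continuous_snd).continuousAt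
      (posDef_one_sub_conjTranspose_mul_self_iff.mp hZ₀ u hu0)
  filter_upwards [hev] with Z hZ
  refine posDef_one_sub_conjTranspose_mul_self_iff.mpr fun x hx => ?_
  have hnx : (‖x‖ : ℂ) ≠ 0 := by exact_mod_cast norm_ne_zero_iff.mpr hx
  have hu : (‖x‖ : ℂ)⁻¹ • x ∈ Metric.sphere (0 : Fin n → ℂ) 1 := by
    simp [norm_smul, hx]
  have hx' : x = (‖x‖ : ℂ) • ((‖x‖ : ℂ)⁻¹ • x) := by rw [smul_inv_smul₀ hnx]
  have := hZ _ hu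
  rw [hx', mulVec_smul, vecNormSq_smul, vecNormSq_smul]
  exact mul_lt_mul_of_pos_left this (Complex.normSq_pos.mpr hnx)

open Metric Filter Topology in
lemma eq_zero_of_sq_norm_le_one_sub_sq_norm {g : ℂ → ℂ} (hg : DifferentiableOn ℂ g (ball 0 1))
    (hbound : ∀ z ∈ ball (0 : ℂ) 1, ‖g z‖ ^ 2 ≤ 1 - ‖z‖ ^ 2) {z : ℂ} (hz : z ∈ ball (0 : ℂ) 1) :
    g z = 0 := by
  rw [mem_ball_zero_iff] at hz
  have hle : ∀ r ∈ Set.Ioo ‖z‖ 1, ‖g z‖ ≤ √(1 - r ^ 2) := by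
    rintro r ⟨hzr, hr1⟩
    have hr0 : 0 < r := (norm_nonneg z).trans_lt hzr
    refine Complex.norm_le_of_forall_mem_frontier_norm_le isBounded_ball
      ⟨hg.mono (ball_subset_ball hr1.le), hg.continuousOn.mono ?_⟩ (fun w hw => ?_)
      (subset_closure (mem_ball_zero_iff.mpr hzr))
    · rw [closure_ball 0 hr0.ne']
      exact closedBall_subset_ball hr1
    · rw [frontier_ball 0 hr0.ne', mem_sphere_zero_iff_norm] at hw
      refine Real.le_sqrt_of_sq_le ?_
      simpa [hw] using hbound w (mem_ball_zero_iff.mpr (hw ▸ hr1))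
  have hlim : Tendsto (fun r : ℝ => √(1 - r ^ 2)) (𝓝[<] 1) (𝓝 0) := by
    have : Continuous fun r : ℝ => √(1 - r ^ 2) := by fun_prop
    simpa using (this.tendsto 1).mono_left nhdsWithin_le_nhds
  have h0 : ‖g z‖ ≤ 0 := ge_of_tendsto hlim (mem_of_superset (Ioo_mem_nhdsLT hz) hle)
  exact norm_le_zero_iff.mp h0

open Filter Topology Asymptotics ComplexConjugate in
lemma eq_zero_of_differentiableAt_conj_mul {g : ℂ → ℂ} (hg : ContinuousAt g 0)
    (h : DifferentiableAt ℂ (fun t => conj t * g t) 0) : g 0 = 0 := by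
  have hR : HasFDerivAt (fun t => conj t * g t) (g 0 • (Complex.conjCLE : ℂ →L[ℝ] ℂ)) 0 := by
    rw [hasFDerivAt_iff_isLittleO_nhds_zero]
    have hsmall : (fun t : ℂ => g t - g 0) =o[𝓝 0] (fun _ => (1 : ℂ)) :=
      (isLittleO_one_iff ℂ).mpr (tendsto_sub_nhds_zero_iff.mpr hg)
    have hconj : (fun t : ℂ => conj t) =O[𝓝 0] id :=
      isBigO_of_le _ fun t => by simp
    simpa [sub_mul, mul_comm] using hconj.mul_isLittleO hsmall
  have hC := h.hasFDerivAt.restrictScalars ℝ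
  have heq := hR.unique hC
  have h1 := congrArg (· 1) heq
  have hI := congrArg (· Complex.I) heq
  simp only [_root_.smul_apply, ContinuousLinearEquiv.coe_coe,
    ContinuousAlgEquiv.coeCLE_apply, Complex.conjCAE_apply, map_one, smul_eq_mul, mul_one,
    ContinuousLinearMap.coe_restrictScalars', fderiv_eq_smul_deriv, one_mul, Complex.conj_I,
    mul_neg] at h1 hI
  rw [← h1] at hI
  have h2I : (2 * Complex.I) * g 0 = 0 := by linear_combination -hI
  simpa [Complex.I_ne_zero] using h2I

section EigenDisc

variable {m n : Type*} [Fintype n]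

lemma vecNormSq_ofLp (x : EuclideanSpace ℂ n) : vecNormSq ⇑x = ‖x‖ ^ 2 := by
  simp [vecNormSq, EuclideanSpace.norm_sq_eq, Complex.normSq_eq_norm_sq]

lemma vecNormSq_mulVec_of_eigenvector [Fintype m] {Z : Matrix m n ℂ} {v : n → ℂ}
    (hv : vecNormSq v = 1) {s : ℝ} (hZv : (Zᴴ * Z) *ᵥ v = (s : ℂ) • v) : vecNormSq (Z *ᵥ v) = s := by
  apply Complex.ofReal_injective
  rw [ofReal_vecNormSq, star_mulVec_dotProduct_mulVec, hZv, dotProduct_smul, ← ofReal_vecNormSq,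
    hv]
  simp

-- For a unit eigenvector `v` of `Zᴴ Z` with eigenvalue `σ²`: the matrix that agrees with `Z` on
-- the orthogonal complement of `v` and sends `v` to `(t / σ) • Z v`.
noncomputable def eigenDisc (Z : Matrix m n ℂ) (v : n → ℂ) (σ : ℝ) (t : ℂ) : Matrix m n ℂ :=
  Z + (t / σ - 1) • vecMulVec (Z *ᵥ v) (star v)

lemma eigenDisc_self (Z : Matrix m n ℂ) (v : n → ℂ) {σ : ℝ} (hσ : σ ≠ 0) :
    eigenDisc Z v σ σ = Z := by
  simp [eigenDisc, div_self (Complex.ofReal_ne_zero.mpr hσ)]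

lemma eigenDisc_mulVec (Z : Matrix m n ℂ) (v : n → ℂ) (σ : ℝ) (t : ℂ) (x : n → ℂ) :
    eigenDisc Z v σ t *ᵥ x = Z *ᵥ x + ((t / σ - 1) * (star v ⬝ᵥ x)) • (Z *ᵥ v) := by
  simp [eigenDisc, add_mulVec, smul_mulVec, vecMulVec_mulVec, smul_smul]

lemma eigenDisc_mulVec_self (Z : Matrix m n ℂ) {v : n → ℂ} (hv : vecNormSq v = 1) (σ : ℝ) (t : ℂ) :
    eigenDisc Z v σ t *ᵥ v = (t / σ) • (Z *ᵥ v) := by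
  rw [eigenDisc_mulVec, ← ofReal_vecNormSq, hv]
  module

lemma differentiable_eigenDisc [Fintype m] (Z : Matrix m n ℂ) (v : n → ℂ) (σ : ℝ) :
    Differentiable ℂ (eigenDisc Z v σ) :=
  (differentiable_const Z).add
    (((differentiable_id.div_const (σ : ℂ)).sub_const (1 : ℂ)).smul_const _)

lemma posDef_one_sub_eigenDisc [Fintype m] [DecidableEq n] {Z : Matrix m n ℂ}
    (hZ : (1 - Zᴴ * Z).PosDef) {v : n → ℂ} (hv : vecNormSq v = 1) {σ : ℝ} (hσ : 0 < σ)
    (hZv : (Zᴴ * Z) *ᵥ v = ((σ ^ 2 : ℝ) : ℂ) • v) {t : ℂ} (ht : ‖t‖ < 1) :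
    (1 - (eigenDisc Z v σ t)ᴴ * eigenDisc Z v σ t).PosDef := by
  have hvv : star v ⬝ᵥ v = 1 := by rw [← ofReal_vecNormSq, hv, Complex.ofReal_one]
  have hZv_norm : vecNormSq (Z *ᵥ v) = σ ^ 2 := vecNormSq_mulVec_of_eigenvector hv hZv
  rw [posDef_one_sub_conjTranspose_mul_self_iff]
  intro x hx
  -- split `x` along `v` and its orthogonal complement, which `Z` maps orthogonally to `Z v`
  set c := star v ⬝ᵥ x
  set y := x - c • v with hy
  have hvy : star v ⬝ᵥ y = 0 := by simp [hy, dotProduct_sub, dotProduct_smul, hvv, c]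
  have hZvy : star (Z *ᵥ v) ⬝ᵥ (Z *ᵥ y) = 0 := by
    have hA : (Zᴴ * Z)ᴴ = Zᴴ * Z := isHermitian_conjTranspose_mul_self Z
    rw [star_mulVec_dotProduct_mulVec, dotProduct_mulVec, ← hA, ← star_mulVec, hZv, star_smul,
      smul_dotProduct, hvy, smul_zero]
  have hx_eq : x = c • v + y := by rw [hy]; abel
  have hWx : eigenDisc Z v σ t *ᵥ x = (t / σ * c) • (Z *ᵥ v) + Z *ᵥ y := by
    rw [eigenDisc_mulVec, hx_eq, mulVec_add, mulVec_smul, dotProduct_add, dotProduct_smul, hvv,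
      hvy]
    module
  have hnWx : vecNormSq (eigenDisc Z v σ t *ᵥ x) =
      ‖t‖ ^ 2 * Complex.normSq c + vecNormSq (Z *ᵥ y) := by
    rw [hWx, vecNormSq_add_of_orthogonal (by rw [star_smul, smul_dotProduct, hZvy, smul_zero]),
      vecNormSq_smul, hZv_norm, Complex.normSq_mul, Complex.normSq_div, Complex.normSq_ofReal,
      Complex.normSq_eq_norm_sq t]
    field_simp
  have hnx : vecNormSq x = Complex.normSq c + vecNormSq y := by
    rw [hx_eq, vecNormSq_add_of_orthogonal (by rw [star_smul, smul_dotProduct, hvy, smul_zero]),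
      vecNormSq_smul, hv, mul_one]
  have ht2 : ‖t‖ ^ 2 < 1 := by nlinarith [norm_nonneg t]
  rw [hnWx, hnx]
  rcases eq_or_ne y 0 with hy0 | hy0
  · have hc : c ≠ 0 := by rintro hc; simp [hx_eq, hc, hy0] at hx
    simp only [hy0, mulVec_zero, vecNormSq_zero, add_zero]
    nlinarith [Complex.normSq_pos.mpr hc]
  · nlinarith [posDef_one_sub_conjTranspose_mul_self_iff.mp hZ y hy0, Complex.normSq_nonneg c]

end EigenDisc

section MatrixDifferentiable

variable {E : Type*} [NormedAddCommGroup E] [NormedSpace ℂ E] {s : Set E}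
  {m n : Type*} [Fintype n] {M : E → Matrix m n ℂ}

lemma DifferentiableOn.matrix_apply (hM : DifferentiableOn ℂ M s) (i : m) (j : n) :
    DifferentiableOn ℂ (fun x => M x i j) s :=
  differentiableOn_pi.mp (differentiableOn_pi.mp hM i) j

lemma DifferentiableOn.mulVec_const (hM : DifferentiableOn ℂ M s) (v : n → ℂ) :
    DifferentiableOn ℂ (fun x => M x *ᵥ v) s :=
  differentiableOn_pi.mpr fun i =>
    DifferentiableOn.fun_sum fun j _ => (hM.matrix_apply i j).mul_const (v j)

lemma DifferentiableOn.submatrix {m' n' : Type*} [Fintype n']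
    (hM : DifferentiableOn ℂ M s) (r : m' → m) (c : n' → n) :
    DifferentiableOn ℂ (fun x => (M x).submatrix r c) s :=
  differentiableOn_pi.mpr fun i => differentiableOn_pi.mpr fun j => hM.matrix_apply (r i) (c j)

end MatrixDifferentiable

section VanishingLowerBlock

open Metric Filter Topology ComplexConjugate

variable {p q : ℕ} {k : Type*} [Fintype k]
  {C : Matrix (Fin q) (Fin p) ℂ → Matrix k (Fin p) ℂ}
  (hC : DifferentiableOn ℂ C (typeIDomain q p))
  (hCZ : ∀ Z ∈ typeIDomain q p, ∀ x, vecNormSq (Z *ᵥ x) + vecNormSq (C Z *ᵥ x) ≤ vecNormSq x)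
include hC hCZ

lemma mulVec_eigenvector_eq_zero_of_vecNormSq_le {Z : Matrix (Fin q) (Fin p) ℂ}
    (hZ : Z ∈ typeIDomain q p) {v : Fin p → ℂ} (hv : vecNormSq v = 1) {σ : ℝ} (hσ : 0 < σ)
    (hZv : (Zᴴ * Z) *ᵥ v = ((σ ^ 2 : ℝ) : ℂ) • v) : C Z *ᵥ v = 0 := by
  have hZv_norm : vecNormSq (Z *ᵥ v) = σ ^ 2 := vecNormSq_mulVec_of_eigenvector hv hZv
  have hσ1 : σ < 1 := by
    have hv0 : v ≠ 0 := by rintro rfl; simp at hv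
    have := posDef_one_sub_conjTranspose_mul_self_iff.mp hZ v hv0
    rw [hZv_norm, hv] at this
    nlinarith
  have hmaps : Set.MapsTo (eigenDisc Z v σ) (ball 0 1) (typeIDomain q p) := fun t ht =>
    posDef_one_sub_eigenDisc hZ hv hσ hZv (mem_ball_zero_iff.mp ht)
  have hdiff : DifferentiableOn ℂ (fun t => C (eigenDisc Z v σ t) *ᵥ v) (ball 0 1) :=
    (hC.comp (differentiable_eigenDisc Z v σ).differentiableOn hmaps).mulVec_const v
  have hbound : ∀ t ∈ ball (0 : ℂ) 1, vecNormSq (C (eigenDisc Z v σ t) *ᵥ v) ≤ 1 - ‖t‖ ^ 2 := by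
    intro t ht
    have hWv : vecNormSq (eigenDisc Z v σ t *ᵥ v) = ‖t‖ ^ 2 := by
      rw [eigenDisc_mulVec_self Z hv, vecNormSq_smul, hZv_norm, Complex.normSq_div,
        Complex.normSq_ofReal, Complex.normSq_eq_norm_sq]
      field_simp
    have := hCZ _ (hmaps ht) v
    rw [hWv, hv] at this
    linarith
  funext i
  have hσball : (σ : ℂ) ∈ ball (0 : ℂ) 1 := by simpa [abs_of_pos hσ] using hσ1
  have := eq_zero_of_sq_norm_le_one_sub_sq_norm (differentiableOn_pi.mp hdiff i)
    (fun t ht => ?_) hσball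
  · simpa [eigenDisc_self Z v hσ.ne'] using this
  · rw [← Complex.normSq_eq_norm_sq]
    exact (normSq_le_vecNormSq _ i).trans (hbound t ht)

lemma mul_conjTranspose_eq_zero_of_vecNormSq_le {Z : Matrix (Fin q) (Fin p) ℂ}
    (hZ : Z ∈ typeIDomain q p) : C Z * Zᴴ = 0 := by
  have hA : (Zᴴ * Z).IsHermitian := isHermitian_conjTranspose_mul_self Z
  set U : Matrix (Fin p) (Fin p) ℂ := (hA.eigenvectorUnitary : Matrix (Fin p) (Fin p) ℂ)
  have hcol : ∀ j, (C Z * (Zᴴ * Z)) *ᵥ ⇑(hA.eigenvectorBasis j) = 0 := by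
    intro j
    rw [← mulVec_mulVec, hA.mulVec_eigenvectorBasis, mulVec_smul]
    rcases (eigenvalues_conjTranspose_mul_self_nonneg Z j).eq_or_lt with h0 | hpos
    · simp [← h0]
    · have hv : vecNormSq ⇑(hA.eigenvectorBasis j) = 1 := by
        rw [vecNormSq_ofLp, hA.eigenvectorBasis.orthonormal.1 j, one_pow]
      rw [mulVec_eigenvector_eq_zero_of_vecNormSq_le hC hCZ hZ hv (Real.sqrt_pos.mpr hpos) (by
        rw [Real.sq_sqrt hpos.le, hA.mulVec_eigenvectorBasis, RCLike.real_smul_eq_coe_smul (K := ℂ)]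
        rfl), smul_zero]
  have hCA : C Z * (Zᴴ * Z) = 0 := by
    have hCAU : C Z * (Zᴴ * Z) * U = 0 := by
      ext i j
      exact congrFun (hcol j) i
    calc C Z * (Zᴴ * Z) = C Z * (Zᴴ * Z) * U * star U := by
          rw [Matrix.mul_assoc _ U, mem_unitaryGroup_iff.mp hA.eigenvectorUnitary.2, Matrix.mul_one]
      _ = 0 := by rw [hCAU, Matrix.zero_mul]
  rw [← self_mul_conjTranspose_eq_zero, conjTranspose_mul, conjTranspose_conjTranspose,
    Matrix.mul_assoc, ← Matrix.mul_assoc Zᴴ, ← Matrix.mul_assoc, hCA, Matrix.zero_mul]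

lemma eq_zero_of_vecNormSq_le [NeZero q] {Z₀ : Matrix (Fin q) (Fin p) ℂ}
    (hZ₀ : Z₀ ∈ typeIDomain q p) : C Z₀ = 0 := by
  ext i l
  set Zt : ℂ → Matrix (Fin q) (Fin p) ℂ := fun t => Z₀ + t • single 0 l 1
  have hZt : Differentiable ℂ Zt := (differentiable_const Z₀).add (differentiable_id.smul_const _)
  have hZt0 : Zt 0 = Z₀ := by simp [Zt]
  have hmem : ∀ᶠ t in 𝓝 0, Zt t ∈ typeIDomain q p :=
    (hZt.continuous.tendsto' 0 Z₀ hZt0).eventually ((isOpen_typeIDomain q p).mem_nhds hZ₀)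
  have hCZt : DifferentiableAt ℂ (fun t => C (Zt t)) 0 :=
    (hC.differentiableAt ((isOpen_typeIDomain q p).mem_nhds (hZt0 ▸ hZ₀))).comp 0 (hZt 0)
  have hentry : ∀ a b, DifferentiableAt ℂ (fun t => C (Zt t) a b) 0 := fun a b =>
    differentiableAt_pi.mp (differentiableAt_pi.mp hCZt a) b
  -- The `(i, 0)` entry of `C (Zt t) * (Zt t)ᴴ = 0` reads `φ t + conj t * C (Zt t) i l = 0` with `φ`
  -- holomorphic, and the antiholomorphic factor `conj t` forces `C Z₀ i l = 0`.
  set φ : ℂ → ℂ := fun t => (C (Zt t) * Z₀ᴴ) i 0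
  have hφ : DifferentiableAt ℂ φ 0 := by
    simp only [φ, mul_apply]
    exact DifferentiableAt.fun_sum fun a _ => (hentry i a).mul_const _
  have hid : (fun t => conj t * C (Zt t) i l) =ᶠ[𝓝 0] fun t => -φ t := by
    filter_upwards [hmem] with t ht
    have h := congrFun (congrFun (mul_conjTranspose_eq_zero_of_vecNormSq_le hC hCZ ht) i) 0
    simp only [Zt, conjTranspose_add, conjTranspose_smul, conjTranspose_single, Matrix.mul_add,
      Matrix.mul_smul, Matrix.add_apply, Matrix.smul_apply, star_one, mul_single_apply_same,
      mul_one, Matrix.zero_apply, smul_eq_mul, Complex.star_def] at h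
    simp only [φ, Zt]
    linear_combination h
  have := eq_zero_of_differentiableAt_conj_mul (hentry i l).continuousAt
    (hφ.neg.congr_of_eventuallyEq hid)
  simpa [hZt0] using this

end VanishingLowerBlock

section FinSumFin

def finSumFinCongr {a b c : ℕ} (h : a + b = c) : Fin a ⊕ Fin b ≃ Fin c :=
  finSumFinEquiv.trans (finCongr h)

lemma padRow_eq_sumElim_comp {a b c : ℕ} (h : a + b = c) (v : Fin a → ℂ) :
    padRow c v = Sum.elim v 0 ∘ (finSumFinCongr h).symm := by
  funext x
  obtain ⟨y, rfl⟩ := (finSumFinCongr h).surjective x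
  cases y <;> simp [padRow, finSumFinCongr]

lemma diagBlock_eq_submatrix {p q a b p' q' : ℕ} (hp : p + a = p') (hq : q + b = q')
    (Z : Matrix (Fin p) (Fin q) ℂ) (W : Matrix (Fin a) (Fin b) ℂ) :
    diagBlock hp hq Z W =
      (fromBlocks Z 0 0 W).submatrix (finSumFinCongr hp).symm (finSumFinCongr hq).symm :=
  rfl

lemma submatrix_finSumFinCongr_eq_fromBlocks {p q a b p' q' : ℕ} (hp : p + a = p')
    (hq : q + b = q') {M : Matrix (Fin q') (Fin p') ℂ} {Z : Matrix (Fin q) (Fin p) ℂ}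
    (h : ∀ A : Fin q → ℂ, padRow q' A ᵥ* M = padRow p' (A ᵥ* Z)) :
    let N := M.submatrix (finSumFinCongr hq) (finSumFinCongr hp)
    N = fromBlocks Z 0 N.toBlocks₂₁ N.toBlocks₂₂ := by
  intro N
  have hN : ∀ A : Fin q → ℂ, Sum.elim A 0 ᵥ* N = Sum.elim (A ᵥ* Z) 0 := fun A => by
    rw [submatrix_vecMul_equiv, ← padRow_eq_sumElim_comp hq, h, padRow_eq_sumElim_comp hp,
      Function.comp_assoc, Equiv.symm_comp_self, Function.comp_id]
  have hrows : ∀ A : Fin q → ℂ, A ᵥ* N.toBlocks₁₁ = A ᵥ* Z ∧ A ᵥ* N.toBlocks₁₂ = A ᵥ* 0 := by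
    intro A
    have := hN A
    rw [← fromBlocks_toBlocks N, vecMul_fromBlocks] at this
    simp only [Sum.elim_comp_inl, Sum.elim_comp_inr, zero_vecMul, add_zero] at this
    exact ⟨by simpa using congrArg (· ∘ Sum.inl) this, by simpa using congrArg (· ∘ Sum.inr) this⟩
  conv_lhs => rw [← fromBlocks_toBlocks N]
  rw [ext_of_single_vecMul fun _ => (hrows _).1, ext_of_single_vecMul fun _ => (hrows _).2]

end FinSumFin

theorem stmt_9_general (p q p' q' : ℕ) (h2q : 2 ≤ q) (hpp : p < p') (hqq : q < q')
    (F : Matrix (Fin q) (Fin p) ℂ → Matrix (Fin q') (Fin p') ℂ)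
    (hF : DifferentiableOn ℂ F (typeIDomain q p))
    (hFp : ProperOn F (typeIDomain q p) (typeIDomain q' p'))
    (hmod : ∀ (A : Fin q → ℂ), ∀ Z ∈ typeIDomain q p,
      (padRow q' A) ᵥ* (F Z) = padRow p' (A ᵥ* Z)) :
    ∃ F22 : Matrix (Fin q) (Fin p) ℂ → Matrix (Fin (q' - q)) (Fin (p' - p)) ℂ,
      DifferentiableOn ℂ F22 (typeIDomain q p) ∧
      Set.MapsTo F22 (typeIDomain q p) (typeIDomain (q' - q) (p' - p)) ∧
      ∀ Z ∈ typeIDomain q p,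
        F Z = diagBlock (Nat.add_sub_cancel' hqq.le) (Nat.add_sub_cancel' hpp.le) Z (F22 Z) := by
  have : NeZero q := ⟨by omega⟩
  set er := finSumFinCongr (Nat.add_sub_cancel' hqq.le)
  set ec := finSumFinCongr (Nat.add_sub_cancel' hpp.le)
  set B := fun Z => (F Z).submatrix er ec
  have hBdiff : DifferentiableOn ℂ B (typeIDomain q p) := hF.submatrix er ec
  have hB : ∀ Z ∈ typeIDomain q p, B Z = fromBlocks Z 0 (B Z).toBlocks₂₁ (B Z).toBlocks₂₂ :=
    fun Z hZ => submatrix_finSumFinCongr_eq_fromBlocks _ _ (hmod · Z hZ)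
  have hBmem : ∀ Z ∈ typeIDomain q p,
      (1 - (fromBlocks Z 0 (B Z).toBlocks₂₁ (B Z).toBlocks₂₂)ᴴ *
        fromBlocks Z 0 (B Z).toBlocks₂₁ (B Z).toBlocks₂₂).PosDef := fun Z hZ => by
    rw [← hB Z hZ]
    exact PosDef.one_sub_conjTranspose_mul_self_submatrix (hFp.1 hZ) er ec
  have hC : ∀ Z ∈ typeIDomain q p, (B Z).toBlocks₂₁ = 0 := fun Z hZ =>
    eq_zero_of_vecNormSq_le (hBdiff.submatrix Sum.inr Sum.inl)
      (fun Z hZ => vecNormSq_mulVec_add_le_of_fromBlocks (hBmem Z hZ)) hZ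
  refine ⟨fun Z => (B Z).toBlocks₂₂, hBdiff.submatrix Sum.inr Sum.inr,
    fun Z hZ => (hBmem Z hZ).one_sub_conjTranspose_mul_self_of_fromBlocks, fun Z hZ => ?_⟩
  rw [diagBlock_eq_submatrix, ← hC Z hZ, ← hB Z hZ]
  simp [B, er, ec]

/-- If a proper holomorphic map `F : D^I_{q,p} → D^I_{q',p'}` (with `p' > p ≥ 2`,
`q' > q ≥ 2`) satisfies `(A,0)·F(Z) = (AZ,0)` for every row vector `A` and every `Z`,
then `F(Z) = [[Z,0],[0,F₂₂(Z)]]` for a holomorphic `F₂₂ : D^I_{q,p} → D^I_{q'-q,p'-p}`. -/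
theorem stmt_9 (p q p' q' : ℕ) (h2p : 2 ≤ p) (h2q : 2 ≤ q) (hpp : p < p') (hqq : q < q')
    (F : Matrix (Fin q) (Fin p) ℂ → Matrix (Fin q') (Fin p') ℂ)
    (hF : DifferentiableOn ℂ F (typeIDomain q p))
    (hFp : ProperOn F (typeIDomain q p) (typeIDomain q' p'))
    (hmod : ∀ (A : Fin q → ℂ), ∀ Z ∈ typeIDomain q p,
      (padRow q' A) ᵥ* (F Z) = padRow p' (A ᵥ* Z)) :
    ∃ F22 : Matrix (Fin q) (Fin p) ℂ → Matrix (Fin (q' - q)) (Fin (p' - p)) ℂ,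
      DifferentiableOn ℂ F22 (typeIDomain q p) ∧
      Set.MapsTo F22 (typeIDomain q p) (typeIDomain (q' - q) (p' - p)) ∧
      ∀ Z ∈ typeIDomain q p,
        F Z = diagBlock (Nat.add_sub_cancel' hqq.le) (Nat.add_sub_cancel' hpp.le) Z (F22 Z) :=
  stmt_9_general p q p' q' h2q hpp hqq F hF hFp hmod
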